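/- If μ is a stable matching of the many-to-one market, λ = T^{-1}(μ), and (f_{ij}, w) satisfies w P_{ij} λ(f_{ij'}) for every j' ∈ J_i, then w ∈ C_{φ_i}(μ(φ_i) ∪ {w}); consequently, if additionally f_{ij} P̄_w λ(w), then (w, φ_i) is a blocking pair of μ. -/
import Mathlib


open Classical

noncomputable section

/- Many-to-one market: firms `ι` with path-independent choice functions
`C i : Finset W → Finset W`, workers `W` with linear preferences `PwFirm w`
over `Option ι` (`none` = `∅`, larger = better).  Via the Aizerman–Malishevski
decomposition `C i S = ⋃_{j} max_S P_{ij}`, firm `i` is split into copies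
indexed by `Fin (J i)`; firm-copy `⟨i, j⟩` has the linear preference
`Pf ⟨i, j⟩` over `Option W`, and workers have linear preferences `Pw w` over
`Option (Σ i, Fin (J i))` refining `PwFirm w`. -/

section Defs

variable {ι W : Type*} [Fintype ι] [DecidableEq ι] [Fintype W] [DecidableEq W]
  {J : ι → ℕ}

/-- `lamF`, `lamW` form a one-to-one matching. -/
def OneIsMatching (lamF : (Σ i : ι, Fin (J i)) → Option W)
    (lamW : W → Option (Σ i : ι, Fin (J i))) : Prop :=
  ∀ (f : Σ i : ι, Fin (J i)) (w : W), lamF f = some w ↔ lamW w = some f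

/-- Stability* of a one-to-one matching: no worker prefers `∅` to her match, no
firm-copy prefers `∅` to its match, no matched firm-copy envies another copy of
the same firm, and there is no blocking* pair `(f, w)` (i.e. `w` prefers `f` to
her match and `f` prefers `w` to the match of every copy of the same firm). -/
def StableStar (Pf : (Σ i : ι, Fin (J i)) → LinearOrder (Option W))
    (Pw : W → LinearOrder (Option (Σ i : ι, Fin (J i))))
    (lamF : (Σ i : ι, Fin (J i)) → Option W)
    (lamW : W → Option (Σ i : ι, Fin (J i))) : Prop :=
  (∀ w : W, ¬ (Pw w).lt (lamW w) none) ∧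
  (∀ f : Σ i : ι, Fin (J i),
    ¬ ((Pf f).lt (lamF f) none ∨
      (lamF f ≠ none ∧ ∃ j' : Fin (J f.1), (Pf f).lt (lamF f) (lamF ⟨f.1, j'⟩)))) ∧
  (∀ (f : Σ i : ι, Fin (J i)) (w : W),
    ¬ ((Pw w).lt (lamW w) (some f) ∧
      ∀ j' : Fin (J f.1), (Pf f).lt (lamF ⟨f.1, j'⟩) (some w)))

/-- `muW`, `muF` form a many-to-one matching. -/
def ManyIsMatching (muW : W → Option ι) (muF : ι → Finset W) : Prop :=
  ∀ (i : ι) (w : W), w ∈ muF i ↔ muW w = some i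

/-- Stability of a many-to-one matching: individual rationality for workers
and firms, and no blocking worker–firm pair. -/
def ManyStable (C : ι → Finset W → Finset W)
    (PwFirm : W → LinearOrder (Option ι))
    (muW : W → Option ι) (muF : ι → Finset W) : Prop :=
  (∀ w : W, (PwFirm w).le none (muW w)) ∧
  (∀ i : ι, C i (muF i) = muF i) ∧
  (∀ (w : W) (i : ι),
    ¬ (w ∉ muF i ∧ w ∈ C i (insert w (muF i)) ∧ (PwFirm w).lt (muW w) (some i)))

/-- The choice functions `C` are decomposed à la Aizerman–Malishevski by the
linear orders `Pf ⟨i, j⟩`: `C i S = ⋃_{j ∈ J_i} max_S P_{ij}`. -/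
def AMDecomposition (C : ι → Finset W → Finset W)
    (Pf : (Σ i : ι, Fin (J i)) → LinearOrder (Option W)) : Prop :=
  ∀ (i : ι) (S : Finset W) (w : W),
    w ∈ C i S ↔ w ∈ S ∧ ∃ j : Fin (J i), ∀ x ∈ S, (Pf ⟨i, j⟩).le (some x) (some w)

/-- `T(λ)`, firm side: `μ(φ_i) = ⋃_{j ∈ J_i} {λ(f_{ij})}`. -/
def Tfirm (lamF : (Σ i : ι, Fin (J i)) → Option W) (i : ι) : Finset W :=
  Finset.univ.filter fun w : W => ∃ j : Fin (J i), lamF ⟨i, j⟩ = some w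

/-- `T(λ)`, worker side: `μ(w)` is the firm owning the copy `λ(w)`. -/
def Tworker (lamW : W → Option (Σ i : ι, Fin (J i))) (w : W) : Option ι :=
  (lamW w).map Sigma.fst

/-- `T⁻¹(μ)`, worker side: a worker `w ∈ μ(φ_i)` is matched to the copy
`f_{ij}` of `φ_i` with the smallest index `j` such that
`w = max_{μ(φ_i)} P_{ij}`. -/
def TinvW (Pf : (Σ i : ι, Fin (J i)) → LinearOrder (Option W))
    (muW : W → Option ι) (muF : ι → Finset W) (w : W) :
    Option (Σ i : ι, Fin (J i)) :=
  match muW w with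
  | none => none
  | some i =>
      if h : (Finset.univ.filter (fun j : Fin (J i) =>
          ∀ x ∈ muF i, (Pf ⟨i, j⟩).le (some x) (some w))).Nonempty then
        some ⟨i, (Finset.univ.filter (fun j : Fin (J i) =>
          ∀ x ∈ muF i, (Pf ⟨i, j⟩).le (some x) (some w))).min' h⟩
      else none

/-- `T⁻¹(μ)`, firm-copy side. -/
def TinvF (Pf : (Σ i : ι, Fin (J i)) → LinearOrder (Option W))
    (muW : W → Option ι) (muF : ι → Finset W) (f : Σ i : ι, Fin (J i)) :
    Option W :=
  if h : ∃ w : W, TinvW Pf muW muF w = some f then some h.choose else none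

end Defs

section Aux

variable {ι W : Type*} [Fintype ι] [DecidableEq ι] [Fintype W] [DecidableEq W]
  {J : ι → ℕ}

lemma tinvW_inv (Pf : (Σ i : ι, Fin (J i)) → LinearOrder (Option W))
    (muW : W → Option ι) (muF : ι → Finset W)
    (w' : W) (f : Σ i : ι, Fin (J i)) (h : TinvW Pf muW muF w' = some f) :
    muW w' = some f.1 ∧ ∀ y ∈ muF f.1, (Pf f).le (some y) (some w') := by
  unfold TinvW at h
  cases hmw : muW w' with
  | none => rw [hmw] at h; simp at h
  | some i0 =>
    rw [hmw] at h; dsimp only at h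
    by_cases hne : (Finset.univ.filter (fun j : Fin (J i0) =>
        ∀ x ∈ muF i0, (Pf ⟨i0, j⟩).le (some x) (some w'))).Nonempty
    · rw [dif_pos hne] at h
      have hf : (⟨i0, (Finset.univ.filter (fun j : Fin (J i0) =>
          ∀ x ∈ muF i0, (Pf ⟨i0, j⟩).le (some x) (some w'))).min' hne⟩ :
          Σ i : ι, Fin (J i)) = f := Option.some_injective _ h
      subst hf
      refine ⟨rfl, ?_⟩
      have hm := Finset.min'_mem _ hne
      exact (Finset.mem_filter.1 hm).2
    · rw [dif_neg hne] at h; simp at h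

lemma tinv_spec (C : ι → Finset W → Finset W)
    (Pf : (Σ i : ι, Fin (J i)) → LinearOrder (Option W))
    (muW : W → Option ι) (muF : ι → Finset W)
    (hmatch : ManyIsMatching muW muF)
    (hAM : AMDecomposition C Pf)
    (i : ι) (hC : C i (muF i) = muF i)
    (x : W) (hx : x ∈ muF i) :
    ∃ jm : Fin (J i), TinvW Pf muW muF x = some ⟨i, jm⟩ ∧
      (∀ y ∈ muF i, (Pf ⟨i, jm⟩).le (some y) (some x)) ∧
      TinvF Pf muW muF ⟨i, jm⟩ = some x := by
  have hmw : muW x = some i := (hmatch i x).1 hx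
  have hx' : x ∈ C i (muF i) := by rw [hC]; exact hx
  obtain ⟨-, j0, hj0⟩ := (hAM i (muF i) x).1 hx'
  have hne : (Finset.univ.filter (fun j : Fin (J i) =>
      ∀ y ∈ muF i, (Pf ⟨i, j⟩).le (some y) (some x))).Nonempty :=
    ⟨j0, Finset.mem_filter.2 ⟨Finset.mem_univ _, hj0⟩⟩
  set jm := (Finset.univ.filter (fun j : Fin (J i) =>
      ∀ y ∈ muF i, (Pf ⟨i, j⟩).le (some y) (some x))).min' hne with hjm
  have hT : TinvW Pf muW muF x = some ⟨i, jm⟩ := by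
    unfold TinvW; rw [hmw]; dsimp only; rw [dif_pos hne]
  have hmax : ∀ y ∈ muF i, (Pf ⟨i, jm⟩).le (some y) (some x) :=
    (Finset.mem_filter.1 (Finset.min'_mem _ hne)).2
  refine ⟨jm, hT, hmax, ?_⟩
  have hex : ∃ w' : W, TinvW Pf muW muF w' = some (⟨i, jm⟩ : Σ i : ι, Fin (J i)) :=
    ⟨x, hT⟩
  unfold TinvF
  rw [dif_pos hex]
  have hspec := hex.choose_spec
  obtain ⟨hmw', hmax'⟩ := tinvW_inv Pf muW muF hex.choose _ hspec
  have hc_mem : hex.choose ∈ muF i := (hmatch i hex.choose).2 hmw'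
  have h1 : (Pf ⟨i, jm⟩).le (some x) (some hex.choose) := hmax' x hx
  have h2 : (Pf ⟨i, jm⟩).le (some hex.choose) (some x) := hmax hex.choose hc_mem
  have := @le_antisymm _ (Pf ⟨i, jm⟩).toPartialOrder _ _ h2 h1
  exact congrArg some (Option.some_injective _ this)

end Aux

/-- let `μ` be a stable matching of the many-to-one market and
`λ = T⁻¹(μ)`.  If the pair `(f_{ij}, w)` satisfies `w P_{ij} λ(f_{ij'})` for
every `j' ∈ J_i`, then `w ∈ C_{φ_i}(μ(φ_i) ∪ {w})`; consequently, if in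
addition `f_{ij} P̄_w λ(w)`, then `(w, φ_i)` is a blocking pair of `μ`
(i.e. `φ_i P_w μ(w)` and `w ∈ C_{φ_i}(μ(φ_i) ∪ {w})`). -/
theorem blockingStar_pair_gives_blocking_pair
    {ι W : Type*} [Fintype ι] [DecidableEq ι] [Fintype W] [DecidableEq W]
    {J : ι → ℕ}
    (C : ι → Finset W → Finset W)
    (Pf : (Σ i : ι, Fin (J i)) → LinearOrder (Option W))
    (PwFirm : W → LinearOrder (Option ι))
    (Pw : W → LinearOrder (Option (Σ i : ι, Fin (J i))))
    (hAM : AMDecomposition C Pf)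
    -- condition (1): copies of a more preferred firm rank above copies of a
    -- less preferred firm
    (hcond1 : ∀ (w : W) (i i' : ι) (j : Fin (J i)) (j' : Fin (J i')),
      (PwFirm w).lt (some i') (some i) →
        (Pw w).lt (some ⟨i', j'⟩) (some ⟨i, j⟩))
    -- condition (1) for ∅: a firm is acceptable iff its copies are
    (hcond0 : ∀ (w : W) (i : ι) (j : Fin (J i)),
      ((PwFirm w).lt none (some i) ↔ (Pw w).lt none (some ⟨i, j⟩)))
    -- condition (2): copies of the same firm are ranked by index
    (hcond2 : ∀ (w : W) (i : ι) (j j' : Fin (J i)),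
      ((Pw w).lt (some ⟨i, j'⟩) (some ⟨i, j⟩) ↔ (j : ℕ) < (j' : ℕ)))
    (muW : W → Option ι) (muF : ι → Finset W)
    (hmatch : ManyIsMatching muW muF)
    (hstable : ManyStable C PwFirm muW muF)
    (i : ι) (j : Fin (J i)) (w : W)
    (hpref : ∀ j' : Fin (J i),
      (Pf ⟨i, j⟩).lt (TinvF Pf muW muF ⟨i, j'⟩) (some w)) :
    w ∈ C i (insert w (muF i)) ∧
    ((Pw w).lt (TinvW Pf muW muF w) (some ⟨i, j⟩) →
      (PwFirm w).lt (muW w) (some i) ∧ w ∈ C i (insert w (muF i))) := by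
  obtain ⟨hIRw, hIRf, hnb⟩ := hstable
  have key : ∀ x ∈ muF i, (Pf ⟨i, j⟩).lt (some x) (some w) := by
    intro x hx
    obtain ⟨jm, -, -, hTF⟩ := tinv_spec C Pf muW muF hmatch hAM i (hIRf i) x hx
    have := hpref jm
    rwa [hTF] at this
  have hwC : w ∈ C i (insert w (muF i)) := by
    rw [hAM]
    refine ⟨Finset.mem_insert_self _ _, j, ?_⟩
    intro x hx
    rcases Finset.mem_insert.1 hx with rfl | hx
    · exact @le_refl _ (Pf ⟨i, j⟩).toPartialOrder.toPreorder _
    · exact @le_of_lt _ (Pf ⟨i, j⟩).toPartialOrder.toPreorder _ _ (key x hx)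
  refine ⟨hwC, fun hlt => ⟨?_, hwC⟩⟩
  cases hmw : muW w with
  | none =>
    have hT : TinvW Pf muW muF w = none := by unfold TinvW; rw [hmw]
    rw [hT] at hlt
    exact (hcond0 w i j).2 hlt
  | some i' =>
    have hwmu : w ∈ muF i' := (hmatch i' w).2 hmw
    obtain ⟨jm, hT, hmax, hTF⟩ :=
      tinv_spec C Pf muW muF hmatch hAM i' (hIRf i') w hwmu
    rw [hT] at hlt
    have hne : i' ≠ i := by
      rintro rfl
      have h := hpref jm
      rw [hTF] at h
      exact @lt_irrefl _ (Pf ⟨i', j⟩).toPartialOrder.toPreorder _ h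
    rcases @lt_trichotomy _ (PwFirm w) (some i') (some i) with h | h | h
    · exact h
    · exact absurd (Option.some_injective _ h) hne
    · exact absurd hlt
        (@lt_asymm _ (Pw w).toPartialOrder.toPreorder _ _ (hcond1 w i' i jm j h))

end
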